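/- arXiv:1709.05398 — 2 statements merged into one kernel-verified Lean document; each statement's English description precedes it below -/
import Mathlib

section
/- For a differentiable curve of rotations R(t) ∈ SO(3) and a constant symmetric matrix K, the time derivative of φ_R(t) = ½ tr(K(I₃ - R(t))) along R satisfies φ̇_R = (as(K R)ᵛ)ᵀ ω, where ω̃ = Rᵀ Ṙ. -/
/-!
Since `Rᵀ R = 1` forces `R Rᵀ = 1`, the body velocity gives `Ṙ = R ω̃`, so
`φ̇_R = -½ tr(K Ṙ) = -½ tr(K R ω̃)`. For any `A`, `tr(A ω̃) = -2 as(A)ᵛ · ω`: only the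
antisymmetric part of `A` pairs with the skew matrix `ω̃`.
-/

open Matrix

/-- The hat map sending `ω ∈ ℝ³` to the skew-symmetric matrix `ω̃` with `ω̃ v = ω × v`. -/
def hat (ω : Fin 3 → ℝ) : Matrix (Fin 3) (Fin 3) ℝ :=
  !![0, -ω 2, ω 1; ω 2, 0, -ω 0; -ω 1, ω 0, 0]

/-- The vee map: inverse of the hat map on skew-symmetric matrices. -/
def vee (S : Matrix (Fin 3) (Fin 3) ℝ) : Fin 3 → ℝ :=
  ![S 2 1, S 0 2, S 1 0]

/-- The antisymmetric part `as(A) = ½(A - Aᵀ)`. -/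
noncomputable def skewPart (A : Matrix (Fin 3) (Fin 3) ℝ) : Matrix (Fin 3) (Fin 3) ℝ :=
  (1 / 2 : ℝ) • (A - Aᵀ)

theorem trace_mul_hat (A : Matrix (Fin 3) (Fin 3) ℝ) (ω : Fin 3 → ℝ) :
    (A * hat ω).trace = -2 * (vee (skewPart A) ⬝ᵥ ω) := by
  simp only [trace, hat, vee, skewPart, dotProduct, diag_apply, mul_apply, of_apply, cons_val',
    cons_val_fin_one, Fin.sum_univ_three, cons_val_zero, cons_val_one, cons_val, Fin.isValue,
    Matrix.smul_apply, Matrix.sub_apply, transpose_apply, smul_eq_mul]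
  ring

theorem hasDerivAt_trace_mul_left {𝕜 n : Type*} [NontriviallyNormedField 𝕜] [Fintype n]
    (K : Matrix n n 𝕜) {R : 𝕜 → Matrix n n 𝕜} {R' : Matrix n n 𝕜} {t : 𝕜}
    (hR : ∀ i j, HasDerivAt (fun τ => R τ i j) (R' i j) t) :
    HasDerivAt (fun s => (K * R s).trace) (K * R').trace t := by
  simp only [trace, diag, mul_apply]
  exact HasDerivAt.fun_sum fun i _ => HasDerivAt.fun_sum fun j _ => (hR j i).const_mul (K i j)

theorem deriv_error_function_general (K : Matrix (Fin 3) (Fin 3) ℝ)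
    (R R' : ℝ → Matrix (Fin 3) (Fin 3) ℝ) (ω : Fin 3 → ℝ) (t : ℝ)
    (hSO : ∀ s, (R s)ᵀ * R s = 1 ∧ (R s).det = 1)
    (hR' : ∀ s i j, HasDerivAt (fun τ => R τ i j) (R' s i j) s)
    (hω : hat ω = (R t)ᵀ * R' t) :
    HasDerivAt (fun s => (1 / 2 : ℝ) * (K * (1 - R s)).trace)
      (vee (skewPart (K * R t)) ⬝ᵥ ω) t := by
  have hvel : R' t = R t * hat ω := by
    rw [hω, ← mul_assoc, mul_eq_one_comm.mp (hSO t).1, one_mul]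
  have hφ : (fun s => (1 / 2 : ℝ) * (K * (1 - R s)).trace)
      = fun s => (1 / 2 : ℝ) * (K.trace - (K * R s).trace) := by
    simp only [Matrix.mul_sub, mul_one, trace_sub]
  have hderiv := ((hasDerivAt_const t K.trace).sub
    (hasDerivAt_trace_mul_left K (hR' t))).const_mul (1 / 2 : ℝ)
  rw [hφ]
  refine hderiv.congr_deriv ?_
  rw [hvel, ← mul_assoc, trace_mul_hat]
  ring

/-- Along a rotation curve `R(t)` with body angular velocity `ω̃ = Rᵀ Ṙ`, the function
`φ_R(t) = ½ tr(K(I - R(t)))` (for constant symmetric `K`) satisfies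
`φ̇_R = (as(K R)ᵛ)ᵀ ω`. -/
theorem deriv_error_function (K : Matrix (Fin 3) (Fin 3) ℝ) (hK : Kᵀ = K)
    (R R' : ℝ → Matrix (Fin 3) (Fin 3) ℝ) (ω : Fin 3 → ℝ) (t : ℝ)
    (hSO : ∀ s, (R s)ᵀ * R s = 1 ∧ (R s).det = 1)
    (hR' : ∀ s i j, HasDerivAt (fun τ => R τ i j) (R' s i j) s)
    (hω : hat ω = (R t)ᵀ * R' t) :
    HasDerivAt (fun s => (1 / 2 : ℝ) * (K * (1 - R s)).trace)
      (vee (skewPart (K * R t)) ⬝ᵥ ω) t :=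
  deriv_error_function_general K R R' ω t hSO hR' hω
end

section
/- For the tilted-hexarotor directions u_i = R_z((i-1)π/3) R_x((-1)^{i+1}α) e₃, i = 1,…,6, the third components of u₁ × u₂ and all other adjacent cross products are nonzero whenever sin α ≠ 0 and cos α ≠ 0, and the set {u₁,…,u₆} spans ℝ³ for α ∈ (0, π/2). -/
open Matrix Real

/-- Rotation about the x-axis. -/
noncomputable def Rx (θ : ℝ) : Matrix (Fin 3) (Fin 3) ℝ :=
  !![1, 0, 0; 0, Real.cos θ, -Real.sin θ; 0, Real.sin θ, Real.cos θ]

/-- Rotation about the z-axis. -/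
noncomputable def Rz (θ : ℝ) : Matrix (Fin 3) (Fin 3) ℝ :=
  !![Real.cos θ, -Real.sin θ, 0; Real.sin θ, Real.cos θ, 0; 0, 0, 1]

/-!
Every direction has the form `u = (sin θ sin ψ, -cos θ sin ψ, cos ψ)`, so the third component of
`u × u'` is `sin ψ sin ψ' sin (θ' - θ)`. For adjacent directions the tilts `ψ = ±α` alternate in
sign and the azimuths differ by `π/3` modulo `2π`, which gives `-(√3/2) sin² α`. Spanning already
holds for `u₀, u₁, u₂`, whose determinant is `-(3√3/2) sin² α cos α`.
-/

theorem Matrix.span_range_eq_top_of_det_ne_zero {ι K : Type*} [Fintype ι] [DecidableEq ι]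
    [Field K] {A : Matrix ι ι K} (hA : A.det ≠ 0) : Submodule.span K (Set.range A) = ⊤ :=
  (linearIndependent_rows_of_det_ne_zero hA).span_eq_top_of_card_eq_finrank' (by simp)

lemma Rz_mul_Rx_mulVec_e3 (θ ψ : ℝ) :
    (Rz θ * Rx ψ) *ᵥ ![0, 0, 1] = ![sin θ * sin ψ, -(cos θ * sin ψ), cos ψ] := by
  ext j
  fin_cases j <;> simp [Rz, Rx, mulVec, dotProduct, Fin.sum_univ_succ]

lemma crossProduct_Rz_mul_Rx_mulVec_e3_two (θ ψ θ' ψ' : ℝ) :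
    crossProduct ((Rz θ * Rx ψ) *ᵥ ![0, 0, 1]) ((Rz θ' * Rx ψ') *ᵥ ![0, 0, 1]) 2 =
      sin ψ * sin ψ' * sin (θ' - θ) := by
  simp [Rz_mul_Rx_mulVec_e3, crossProduct, sin_sub]
  ring

lemma sin_neg_one_pow_mul (n : ℕ) (x : ℝ) : sin ((-1) ^ n * x) = (-1) ^ n * sin x := by
  rcases neg_one_pow_eq_or ℝ n with h | h <;> simp [h]

lemma neg_one_pow_val_add_one_fin_six (i : Fin 6) :
    (-1 : ℝ) ^ ((i + 1 : Fin 6) : ℕ) = -(-1) ^ (i : ℕ) := by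
  rw [Fin.val_add, Fin.val_one, neg_one_pow_eq_pow_mod_two,
    Nat.mod_mod_of_dvd _ (by norm_num : 2 ∣ 6), ← neg_one_pow_eq_pow_mod_two, pow_succ, mul_neg_one]

lemma sin_val_add_one_fin_six_sub (i : Fin 6) :
    sin (((i + 1 : Fin 6) : ℕ) * π / 3 - (i : ℕ) * π / 3) = sin (π / 3) := by
  have h := Nat.mod_add_div ((i : ℕ) + 1) 6
  rw [Fin.val_add, Fin.val_one, ← sin_sub_nat_mul_two_pi (π / 3) (((i : ℕ) + 1) / 6)]
  congr 1
  have h' : (((i : ℕ) + 1) % 6 : ℕ) + 6 * ((((i : ℕ) + 1) / 6 : ℕ) : ℝ) = (i : ℕ) + 1 := by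
    exact_mod_cast h
  linear_combination (π / 3) * h'

/-- For the tilted-hexarotor directions `u_i = R_z((i-1)π/3) R_x((-1)^{i+1}α) e₃`,
the third components of all adjacent cross products `u_i × u_{i+1}` are nonzero
whenever `sin α ≠ 0` and `cos α ≠ 0`, and `{u₁,…,u₆}` spans `ℝ³` for `α ∈ (0, π/2)`. -/
theorem adjacent_cross_products_and_span (α : ℝ) (u : Fin 6 → Fin 3 → ℝ)
    (hu : ∀ i : Fin 6, u i =
      (Rz ((i : ℕ) * Real.pi / 3) * Rx ((-1 : ℝ) ^ (i : ℕ) * α)).mulVec ![0, 0, 1]) :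
    (Real.sin α ≠ 0 → Real.cos α ≠ 0 →
      ∀ i : Fin 6, crossProduct (u i) (u (i + 1)) 2 ≠ 0) ∧
    (α ∈ Set.Ioo 0 (Real.pi / 2) →
      Submodule.span ℝ (Set.range u) = (⊤ : Submodule ℝ (Fin 3 → ℝ))) := by
  refine ⟨fun hs _ i => ?_, fun ⟨hα₀, hα₁⟩ => ?_⟩
  · rw [hu, hu, crossProduct_Rz_mul_Rx_mulVec_e3_two, sin_neg_one_pow_mul, sin_neg_one_pow_mul,
      neg_one_pow_val_add_one_fin_six, sin_val_add_one_fin_six_sub, sin_pi_div_three]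
    simp [hs]
  · have hs : 0 < sin α := sin_pos_of_pos_of_lt_pi hα₀ (by linarith [pi_pos])
    have hc : 0 < cos α := cos_pos_of_mem_Ioo ⟨by linarith [pi_pos], hα₁⟩
    have hsub : Set.range ![u 0, u 1, u 2] ⊆ Set.range u := by
      rintro _ ⟨j, rfl⟩
      fin_cases j <;> exact ⟨_, rfl⟩
    refine eq_top_mono (Submodule.span_mono hsub)
      (span_range_eq_top_of_det_ne_zero (A := of ![u 0, u 1, u 2]) ?_)
    have hθ₂ : (2 : ℝ) * π / 3 = π - π / 3 := by ring
    have hdet : det (of ![u 0, u 1, u 2]) = -(3 * √3 / 2 * sin α ^ 2 * cos α) := by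
      rw [det_fin_three]
      simp [hu, Rz_mul_Rx_mulVec_e3, hθ₂]
      ring
    rw [hdet, neg_ne_zero]
    positivity
end
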